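/- Let DZE be jointly distributed by μ and let p, δ > 0 with p ≥ 1/|D|. If the ε-smooth average conditional min-entropy satisfies H_min^{ε,avg}(D|Z,E) ≥ −log₂(pδ), then the ε+δ-smooth (worst-case) conditional min-entropy satisfies H_min^{ε+δ}(D|Z,E) ≥ −log₂ p. -/
import Mathlib


open scoped Classical
open Finset

/-- Marginal `ν(z,e)` of a joint distribution on `D × Z × E`. -/
noncomputable def margZE {D Z E : Type*} [Fintype D]
    (ν : D → Z → E → ℝ) (z : Z) (e : E) : ℝ := ∑ d, ν d z e

/-- `max_d ν(d|z,e)`. -/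
noncomputable def maxcond {D Z E : Type*} [Fintype D] [Nonempty D]
    (ν : D → Z → E → ℝ) (z : Z) (e : E) : ℝ :=
  Finset.univ.sup' Finset.univ_nonempty (fun d => ν d z e / margZE ν z e)

/-- Average-to-worst-case conversion for smooth conditional min-entropy:
if `H_min^{ε,avg}(D|Z,E) ≥ −log₂(pδ)` then `H_min^{ε+δ}(D|Z,E) ≥ −log₂ p`. -/
theorem avg_to_worst_smooth_min_entropy
    {D Z E : Type*} [Fintype D] [Fintype Z] [Fintype E] [Nonempty D]
    (μ : D → Z → E → ℝ)
    (hpos : ∀ d z e, 0 ≤ μ d z e) (hsum : ∑ d, ∑ z, ∑ e, μ d z e = 1)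
    (p δ ε : ℝ) (hp : 0 < p) (hδ : 0 < δ) (hε : 0 ≤ ε)
    (hcard : 1 / (Fintype.card D : ℝ) ≤ p)
    (havg : ∃ ν : D → Z → E → ℝ, (∀ d z e, 0 ≤ ν d z e) ∧
      (∑ d, ∑ z, ∑ e, ν d z e = 1) ∧
      (1 / 2) * (∑ d, ∑ z, ∑ e, |μ d z e - ν d z e|) ≤ ε ∧
      (∑ z, ∑ e, margZE ν z e * maxcond ν z e) ≤ p * δ) :
    ∃ η : D → Z → E → ℝ, (∀ d z e, 0 ≤ η d z e) ∧
      (∑ d, ∑ z, ∑ e, η d z e = 1) ∧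
      (1 / 2) * (∑ d, ∑ z, ∑ e, |μ d z e - η d z e|) ≤ ε + δ ∧
      ∀ z e d, η d z e / margZE η z e ≤ p := by
  obtain ⟨ν, hν0, hν1, hνtv, hνavg⟩ := havg
  set n : ℝ := (Fintype.card D : ℝ) with hn
  have hnpos : (0:ℝ) < n := by
    simp only [hn]
    exact_mod_cast Fintype.card_pos
  have hmarg0 : ∀ z e, 0 ≤ margZE ν z e := fun z e =>
    Finset.sum_nonneg fun d _ => hν0 d z e
  have hmax0 : ∀ z e, 0 ≤ maxcond ν z e := by
    intro z e
    obtain ⟨d⟩ := ‹Nonempty D›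
    calc (0:ℝ) ≤ ν d z e / margZE ν z e := div_nonneg (hν0 d z e) (hmarg0 z e)
    _ ≤ _ := Finset.le_sup' (fun d => ν d z e / margZE ν z e) (Finset.mem_univ d)
  set η : D → Z → E → ℝ := fun d z e =>
    if p < maxcond ν z e then margZE ν z e / n else ν d z e with hη
  have hη0 : ∀ d z e, 0 ≤ η d z e := by
    intro d z e; simp only [hη]
    split
    · exact div_nonneg (hmarg0 z e) hnpos.le
    · exact hν0 d z e
  have hmargη : ∀ z e, margZE η z e = margZE ν z e := by
    intro z e
    by_cases h : p < maxcond ν z e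
    · simp only [margZE, hη, if_pos h, Finset.sum_const, nsmul_eq_mul, Finset.card_univ]
      rw [← hn]
      field_simp
    · simp only [margZE, hη, if_neg h]
  -- Markov bound: total bad-set mass ≤ δ
  set S : ℝ := ∑ z, ∑ e, (if p < maxcond ν z e then margZE ν z e else 0) with hS
  have hS0 : 0 ≤ S := Finset.sum_nonneg fun z _ => Finset.sum_nonneg fun e _ => by
    split
    · exact hmarg0 z e
    · exact le_rfl
  have hSδ : S ≤ δ := by
    have key : p * S ≤ p * δ := by
      rw [hS, Finset.mul_sum]
      calc ∑ z, p * ∑ e, (if p < maxcond ν z e then margZE ν z e else 0)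
          ≤ ∑ z, ∑ e, margZE ν z e * maxcond ν z e := by
            apply Finset.sum_le_sum
            intro z _
            rw [Finset.mul_sum]
            apply Finset.sum_le_sum
            intro e _
            split
            · rename_i hb
              calc p * margZE ν z e ≤ maxcond ν z e * margZE ν z e :=
                    mul_le_mul_of_nonneg_right hb.le (hmarg0 z e)
                _ = margZE ν z e * maxcond ν z e := mul_comm _ _
            · simpa using mul_nonneg (hmarg0 z e) (hmax0 z e)
        _ ≤ p * δ := hνavg
    exact le_of_mul_le_mul_left key hp
  refine ⟨η, hη0, ?_, ?_, ?_⟩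
  · -- total mass
    have hA : ∀ (κ : D → Z → E → ℝ), (∑ d, ∑ z, ∑ e, κ d z e) = ∑ z, ∑ e, margZE κ z e := by
      intro κ
      rw [Finset.sum_comm]
      exact Finset.sum_congr rfl fun z _ => Finset.sum_comm
    rw [hA η]
    rw [show (∑ z, ∑ e, margZE η z e) = ∑ z, ∑ e, margZE ν z e from
      Finset.sum_congr rfl fun z _ => Finset.sum_congr rfl fun e _ => hmargη z e]
    rw [← hA ν]
    exact hν1
  · -- TV distance
    have hdiff : ∀ z e, (∑ d, |ν d z e - η d z e|) ≤
        (if p < maxcond ν z e then 2 * margZE ν z e else 0) := by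
      intro z e
      by_cases h : p < maxcond ν z e
      · rw [if_pos h]
        calc (∑ d, |ν d z e - η d z e|) ≤ ∑ d, (ν d z e + margZE ν z e / n) := by
              apply Finset.sum_le_sum
              intro d _
              simp only [hη, if_pos h]
              calc |ν d z e - margZE ν z e / n| ≤ |ν d z e| + |margZE ν z e / n| :=
                    abs_sub _ _
                _ = ν d z e + margZE ν z e / n := by
                    rw [abs_of_nonneg (hν0 d z e),
                      abs_of_nonneg (div_nonneg (hmarg0 z e) hnpos.le)]
          _ = margZE ν z e + margZE ν z e := by
              rw [Finset.sum_add_distrib, Finset.sum_const, nsmul_eq_mul,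
                Finset.card_univ, ← hn]
              rw [margZE]
              field_simp
          _ = 2 * margZE ν z e := by ring
      · rw [if_neg h]
        simp only [hη, if_neg h]
        simp
    have h2 : (∑ d, ∑ z, ∑ e, |ν d z e - η d z e|) ≤ 2 * S := by
      rw [Finset.sum_comm]
      rw [show (∑ z, ∑ d : D, ∑ e, |ν d z e - η d z e|) =
          ∑ z, ∑ e, ∑ d, |ν d z e - η d z e| from
        Finset.sum_congr rfl fun z _ => Finset.sum_comm]
      calc (∑ z, ∑ e, ∑ d, |ν d z e - η d z e|)
          ≤ ∑ z, ∑ e, (if p < maxcond ν z e then 2 * margZE ν z e else 0) := by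
            exact Finset.sum_le_sum fun z _ => Finset.sum_le_sum fun e _ => hdiff z e
        _ = 2 * S := by
            rw [hS, Finset.mul_sum]
            refine Finset.sum_congr rfl fun z _ => ?_
            rw [Finset.mul_sum]
            refine Finset.sum_congr rfl fun e _ => ?_
            split <;> simp
    have h1 : (∑ d, ∑ z, ∑ e, |μ d z e - η d z e|) ≤
        (∑ d, ∑ z, ∑ e, |μ d z e - ν d z e|) + (∑ d, ∑ z, ∑ e, |ν d z e - η d z e|) := by
      rw [← Finset.sum_add_distrib]
      refine Finset.sum_le_sum fun d _ => ?_
      rw [← Finset.sum_add_distrib]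
      refine Finset.sum_le_sum fun z _ => ?_
      rw [← Finset.sum_add_distrib]
      refine Finset.sum_le_sum fun e _ => ?_
      calc |μ d z e - η d z e| = |(μ d z e - ν d z e) + (ν d z e - η d z e)| := by ring_nf
        _ ≤ _ := abs_add_le _ _
    have := h1.trans (add_le_add le_rfl h2)
    nlinarith [hνtv, hSδ]
  · -- conditional bound
    intro z e d
    by_cases h : p < maxcond ν z e
    · rcases eq_or_lt_of_le (hmarg0 z e) with hm | hm
      · simp only [hmargη, ← hm, div_zero]
        exact hp.le
      · rw [hmargη]
        simp only [hη, if_pos h]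
        have key : margZE ν z e / n / margZE ν z e = 1 / n := by
          field_simp
        rw [key]
        exact hcard
    · rw [hmargη]
      simp only [hη, if_neg h]
      calc ν d z e / margZE ν z e ≤ maxcond ν z e :=
            Finset.le_sup' (fun d => ν d z e / margZE ν z e) (Finset.mem_univ d)
        _ ≤ p := not_lt.mp h
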